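/- Let (K,v) be a valued field, μ a valuation on K[x] extending v with values in Λ ∪ {∞}, φ a key polynomial for μ, Λ' a linearly ordered abelian group equipped with an order-preserving group embedding Λ → Λ', and γ ∈ Λ' with μ(φ) < γ. Define μ' : K[x] → Λ' ∪ {∞} on canonical φ-expansions by μ'(Σ_{s≥0} a_s φ^s) = min_{s≥0} (μ(a_s) + s·γ). Then: (a) μ' is a valuation on K[x] extending v, and μ(f) ≤ μ'(f) for all f ∈ K[x], with equality for nonzero f if and only if φ ∤_μ f; (b) φ is a key polynomial for μ', and every key polynomial for μ' has degree at least deg φ. -/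

import Mathlib

open Polynomial

section Core

variable {K : Type*} [Field K] {Λ : Type*} [AddCommGroup Λ] [LinearOrder Λ] [IsOrderedAddMonoid Λ]

/-- A (Krull) valuation on a field `K`, written additively, with values in `Λ ∪ {∞}`. -/
def IsVal (v : K → WithTop Λ) : Prop :=
  (∀ a b : K, v (a * b) = v a + v b) ∧
  (∀ a b : K, min (v a) (v b) ≤ v (a + b)) ∧
  (∀ a : K, v a = ⊤ ↔ a = 0)

/-- A valuation on `K[x]` extending the valuation `v` on `K`. -/
def IsValExt (v : K → WithTop Λ) (μ : K[X] → WithTop Λ) : Prop :=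
  (∀ f g : K[X], μ (f * g) = μ f + μ g) ∧
  (∀ f g : K[X], min (μ f) (μ g) ≤ μ (f + g)) ∧
  (∀ f : K[X], μ f = ⊤ ↔ f = 0) ∧
  (∀ c : K, μ (C c) = v c)

/-- A semivaluation on `K[x]` extending `v`: the value `∞` may be attained at
nonzero polynomials. -/
def IsSemivalExt (v : K → WithTop Λ) (μ : K[X] → WithTop Λ) : Prop :=
  (∀ f g : K[X], μ (f * g) = μ f + μ g) ∧
  (∀ f g : K[X], min (μ f) (μ g) ≤ μ (f + g)) ∧
  μ 0 = ⊤ ∧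
  (∀ c : K, μ (C c) = v c)

/-- `f ∼_μ h` : `μ (f - h) > μ f`. -/
def MuEquiv (μ : K[X] → WithTop Λ) (f h : K[X]) : Prop := μ f < μ (f - h)

/-- `h |_μ f` : `f ∼_μ q * h` for some `q`. -/
def MuDvd (μ : K[X] → WithTop Λ) (h f : K[X]) : Prop := ∃ q : K[X], MuEquiv μ f (q * h)

/-- `f` is `μ`-minimal : `f ∤_μ g` for all nonzero `g` of degree `< deg f`. -/
def MuMinimal (μ : K[X] → WithTop Λ) (f : K[X]) : Prop :=
  ∀ g : K[X], g ≠ 0 → g.degree < f.degree → ¬ MuDvd μ f g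

/-- `f` is `μ`-irreducible. -/
def MuIrred (μ : K[X] → WithTop Λ) (f : K[X]) : Prop :=
  f ≠ 0 ∧ ¬ MuDvd μ f 1 ∧ ∀ g h : K[X], MuDvd μ f (g * h) → MuDvd μ f g ∨ MuDvd μ f h

/-- A (MacLane–Vaquié) key polynomial for `μ`: monic, `μ`-minimal and `μ`-irreducible. -/
def IsKeyPol (μ : K[X] → WithTop Λ) (φ : K[X]) : Prop :=
  φ.Monic ∧ MuMinimal μ φ ∧ MuIrred μ φ

end Core

/-!
Reading `w = [μ; φ, γ]` off canonical expansions gives the recursion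
`w f = min (μ (f %ₘ φ)) (γ + w (f /ₘ φ))`, `w = μ` below degree `deg φ`, and the ultrametric
inequality. As `φ` is `μ`-minimal, `μ f ≤ min (μ (f %ₘ φ)) (μ (f /ₘ φ) + μ φ)`, so `μ ≤ w` by
induction on the degree, with equality exactly when `φ ∤_μ f`. Expanding a product gives
`w f + w g ≤ w (f g)`. Conversely, if the minimum for `f` is attained only by the quotient term,
`f g` is dominated by `φ (f /ₘ φ) g` and one inducts; if for both factors it is attained by the
remainder, `μ`-irreducibility of `φ` gives `μ ((f g) %ₘ φ) = μ (f %ₘ φ) + μ (g %ₘ φ)`, which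
also makes `φ` irreducible for `w`. Finally, a key polynomial `ψ` for `w` with `deg ψ < deg φ`
would give `γ = w φ ≤ min (w (φ %ₘ ψ)) (w (φ /ₘ ψ) + w ψ) ≤ μ φ`, since `w = μ` on these three
polynomials.
-/

section MuDivisibility

variable {K : Type*} [Field K] {Λ : Type*} [LinearOrder Λ] {ν : K[X] → WithTop Λ} {ψ f : K[X]}

theorem muDvd_iff_lt_apply_modByMonic (hψ : ψ.Monic) (hle : ∀ f, ν f ≤ ν (f %ₘ ψ)) :
    MuDvd ν ψ f ↔ ν f < ν (f %ₘ ψ) := by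
  constructor
  · rintro ⟨q, hq⟩
    calc ν f < ν (f - q * ψ) := hq
      _ ≤ ν ((f - q * ψ) %ₘ ψ) := hle _
      _ = ν (f %ₘ ψ) := by rw [sub_modByMonic, mul_self_modByMonic hψ, sub_zero]
  · intro h
    refine ⟨f /ₘ ψ, ?_⟩
    show ν f < ν (f - f /ₘ ψ * ψ)
    rwa [mul_comm, ← modByMonic_eq_sub_mul_div]

theorem MuMinimal.apply_le_apply_modByMonic (hmin : MuMinimal ν ψ) (hψ : ψ.Monic)
    (h0 : ν 0 = ⊤) (f : K[X]) : ν f ≤ ν (f %ₘ ψ) := by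
  by_cases hr : f %ₘ ψ = 0
  · rw [hr, h0]
    exact le_top
  refine not_lt.1 fun hlt => hmin _ hr (degree_modByMonic_lt f hψ) ⟨-(f /ₘ ψ), ?_⟩
  show ν (f %ₘ ψ) < ν (f %ₘ ψ - -(f /ₘ ψ) * ψ)
  rwa [show f %ₘ ψ - -(f /ₘ ψ) * ψ = f by linear_combination modByMonic_add_div f ψ]

theorem muMinimal_of_forall_le_modByMonic (hψ : ψ.Monic) (hle : ∀ f, ν f ≤ ν (f %ₘ ψ)) :
    MuMinimal ν ψ := by
  intro g _ hg hdvd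
  rw [muDvd_iff_lt_apply_modByMonic hψ hle, (modByMonic_eq_self_iff hψ).2 hg] at hdvd
  exact lt_irrefl _ hdvd

theorem IsKeyPol.monic (hψ : IsKeyPol ν ψ) : ψ.Monic := hψ.1

theorem IsKeyPol.muMinimal (hψ : IsKeyPol ν ψ) : MuMinimal ν ψ := hψ.2.1

end MuDivisibility

section Valuation

variable {K : Type*} [Field K] {Λ : Type*} [AddCommGroup Λ] [LinearOrder Λ]
  {v : K → WithTop Λ} {ν : K[X] → WithTop Λ} {ψ f : K[X]}

theorem IsValExt.map_mul (hν : IsValExt v ν) (f g : K[X]) : ν (f * g) = ν f + ν g := hν.1 f g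

theorem IsValExt.min_le_map_add (hν : IsValExt v ν) (f g : K[X]) :
    min (ν f) (ν g) ≤ ν (f + g) :=
  hν.2.1 f g

theorem IsValExt.map_eq_top_iff (hν : IsValExt v ν) : ν f = ⊤ ↔ f = 0 := hν.2.2.1 f

theorem IsValExt.map_zero (hν : IsValExt v ν) : ν 0 = ⊤ := hν.map_eq_top_iff.2 rfl

theorem IsValExt.map_C (hν : IsValExt v ν) (c : K) : ν (C c) = v c := hν.2.2.2 c

theorem IsValExt.map_one (hν : IsValExt v ν) : ν 1 = 0 := by
  have h : ν 1 + ν 1 = ν 1 := by rw [← hν.map_mul, one_mul]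
  lift ν 1 to Λ using fun h => one_ne_zero (hν.map_eq_top_iff.1 h) with c
  norm_cast at h ⊢
  exact add_eq_left.1 h

noncomputable def IsValExt.toAddValuation [IsOrderedAddMonoid Λ] (hν : IsValExt v ν) :
    AddValuation K[X] (WithTop Λ) :=
  AddValuation.of ν hν.map_zero hν.map_one hν.min_le_map_add hν.map_mul

theorem IsValExt.map_neg [IsOrderedAddMonoid Λ] (hν : IsValExt v ν) (f : K[X]) :
    ν (-f) = ν f :=
  hν.toAddValuation.map_neg f

theorem IsValExt.apply_le_apply_divByMonic_add [IsOrderedAddMonoid Λ] (hν : IsValExt v ν)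
    (hψ : ψ.Monic) (hmin : MuMinimal ν ψ) (f : K[X]) : ν f ≤ ν (f /ₘ ψ) + ν ψ :=
  calc ν f ≤ min (ν f) (ν (-(f %ₘ ψ))) := by
        rw [hν.map_neg]
        exact le_min le_rfl (hmin.apply_le_apply_modByMonic hψ hν.map_zero f)
    _ ≤ ν (f + -(f %ₘ ψ)) := hν.min_le_map_add _ _
    _ = ν (f /ₘ ψ) + ν ψ := by
        rw [← hν.map_mul, show f + -(f %ₘ ψ) = f /ₘ ψ * ψ by
          linear_combination -(modByMonic_add_div f ψ)]

theorem IsKeyPol.degree_pos (hν : IsValExt v ν) (hψ : IsKeyPol ν ψ) : 0 < ψ.degree := by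
  refine lt_of_not_ge fun hle => hψ.2.2.2.1 ⟨1, ?_⟩
  rw [eq_one_of_monic_natDegree_zero hψ.monic (natDegree_eq_zero_iff_degree_le_zero.2 hle)]
  show ν 1 < ν (1 - 1 * 1)
  simp [hν.map_one, hν.map_zero]

theorem IsKeyPol.apply_mul_modByMonic (hν : IsValExt v ν) (hψ : IsKeyPol ν ψ) (f g : K[X]) :
    ν ((f * g) %ₘ ψ) = ν (f %ₘ ψ) + ν (g %ₘ ψ) := by
  have hle := hψ.muMinimal.apply_le_apply_modByMonic hψ.monic hν.map_zero
  rw [mul_modByMonic, ← hν.map_mul]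
  refine le_antisymm ?_ (hle _)
  rcases eq_or_ne (f %ₘ ψ) 0 with hf | hf
  · simp [hf]
  rcases eq_or_ne (g %ₘ ψ) 0 with hg | hg
  · simp [hg]
  have hndvd : ¬ MuDvd ν ψ (f %ₘ ψ * (g %ₘ ψ)) := fun h =>
    (hψ.2.2.2.2 _ _ h).elim (hψ.muMinimal _ hf (degree_modByMonic_lt f hψ.monic))
      (hψ.muMinimal _ hg (degree_modByMonic_lt g hψ.monic))
  exact not_lt.1 (hndvd ∘ (muDvd_iff_lt_apply_modByMonic hψ.monic hle).2)

end Valuation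

protected theorem Finset.inf_add {ι M : Type*} [LinearOrderedAddCommMonoidWithTop M]
    (s : Finset ι) (F : ι → M) (a : M) : s.inf F + a = s.inf fun i => F i + a := by
  induction s using Finset.cons_induction with
  | empty => simp
  | cons i s _ ih =>
    rw [Finset.inf_cons, Finset.inf_cons, ← ih]
    exact (min_add_add_right _ _ _).symm

theorem Finset.inf_range_succ' {α : Type*} [SemilatticeInf α] [OrderTop α] (F : ℕ → α) (n : ℕ) :
    (Finset.range (n + 1)).inf F = F 0 ⊓ (Finset.range n).inf fun i => F (i + 1) := by
  induction n with
  | zero => simp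
  | succ n ih =>
    rw [Finset.range_add_one, Finset.inf_insert, ih, Finset.range_add_one, Finset.inf_insert]
    exact inf_left_comm _ _ _

section Expansion

variable {K : Type*} [Field K] {φ f : K[X]}

theorem natDegree_divByMonic_lt (hφ0 : 0 < φ.degree) (hq : f /ₘ φ ≠ 0) :
    (f /ₘ φ).natDegree < f.natDegree :=
  natDegree_lt_natDegree hq (degree_divByMonic_lt f φ (fun hf => hq (by simp [hf])) hφ0)

noncomputable def expansionCoeff (φ : K[X]) : K[X] → ℕ → K[X]
  | f, 0 => f %ₘ φ
  | f, s + 1 => expansionCoeff φ (f /ₘ φ) s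

theorem degree_expansionCoeff_lt (hφ : φ.Monic) (f : K[X]) (s : ℕ) :
    (expansionCoeff φ f s).degree < φ.degree := by
  induction s generalizing f with
  | zero => exact degree_modByMonic_lt f hφ
  | succ s ih => exact ih _

theorem sum_expansionCoeff (hφ : φ.Monic) (hφ0 : 0 < φ.degree) {N : ℕ}
    (hN : f.natDegree ≤ N) : ∑ s ∈ Finset.range (N + 1), expansionCoeff φ f s * φ ^ s = f := by
  induction N generalizing f with
  | zero =>
    have hf : f.degree < φ.degree := (degree_le_of_natDegree_le hN).trans_lt hφ0
    simp [expansionCoeff, (modByMonic_eq_self_iff hφ).2 hf]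
  | succ N ih =>
    have hq : (f /ₘ φ).natDegree ≤ N := by
      have := natDegree_pos_iff_degree_pos.2 hφ0
      rw [natDegree_divByMonic f hφ]
      omega
    rw [Finset.sum_range_succ']
    simp only [expansionCoeff, pow_succ, ← mul_assoc, ← Finset.sum_mul, ih hq, pow_zero, mul_one]
    linear_combination modByMonic_add_div f φ

end Expansion

section Augmentation

variable {K : Type*} [Field K] {Λ : Type*} [AddCommGroup Λ] {Λ' : Type*} [AddCommGroup Λ']
  [LinearOrder Λ']

/-- `w` is the augmented valuation `[μ; φ, γ]`, with `μ` read in `Λ'` through `ι`. -/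
def IsAugmentation (μ : K[X] → WithTop Λ) (φ : K[X]) (ι : Λ →+ Λ') (γ : Λ')
    (w : K[X] → WithTop Λ') : Prop :=
  ∀ (N : ℕ) (a : ℕ → K[X]), (∀ s, (a s).degree < φ.degree) →
    w (∑ s ∈ Finset.range N, a s * φ ^ s) =
      (Finset.range N).inf fun s => WithTop.map ι (μ (a s)) + s • (γ : WithTop Λ')

namespace IsAugmentation

variable {v : K → WithTop Λ} {μ : K[X] → WithTop Λ} {φ f g : K[X]} {ι : Λ →+ Λ'} {γ : Λ'}
  {w : K[X] → WithTop Λ'}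

theorem apply_zero (hw : IsAugmentation μ φ ι γ w) (hφ0 : 0 < φ.degree) : w 0 = ⊤ := by
  simpa using hw 0 (fun _ => 0) fun _ => by simpa using bot_le.trans_lt hφ0

theorem apply_of_degree_lt (hw : IsAugmentation μ φ ι γ w) (hf : f.degree < φ.degree) :
    w f = WithTop.map ι (μ f) := by
  simpa using hw 1 (fun _ => f) fun _ => hf

theorem apply_eq_inf (hw : IsAugmentation μ φ ι γ w) (hφ : φ.Monic) (hφ0 : 0 < φ.degree)
    {N : ℕ} (hN : f.natDegree ≤ N) :
    w f = (Finset.range (N + 1)).inf fun s =>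
      WithTop.map ι (μ (expansionCoeff φ f s)) + s • (γ : WithTop Λ') := by
  have h := hw (N + 1) _ (degree_expansionCoeff_lt hφ f)
  rwa [sum_expansionCoeff hφ hφ0 hN] at h

theorem apply_eq_top_iff [LinearOrder Λ] (hw : IsAugmentation μ φ ι γ w) (hμ : IsValExt v μ)
    (hφ : φ.Monic) (hφ0 : 0 < φ.degree) : w f = ⊤ ↔ f = 0 := by
  refine ⟨fun h => ?_, fun h => h ▸ hw.apply_zero hφ0⟩
  rw [hw.apply_eq_inf hφ hφ0 le_rfl, Finset.inf_eq_top_iff] at h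
  rw [← sum_expansionCoeff hφ hφ0 (le_refl f.natDegree)]
  refine Finset.sum_eq_zero fun s hs => ?_
  have hs := h s hs
  rw [WithTop.add_eq_top, WithTop.map_eq_top_iff, hμ.map_eq_top_iff, ← WithTop.coe_nsmul] at hs
  rw [hs.resolve_right WithTop.coe_ne_top, zero_mul]

theorem apply_mul_modByMonic [LinearOrder Λ] (hw : IsAugmentation μ φ ι γ w)
    (hμ : IsValExt v μ) (hφ : IsKeyPol μ φ) (f g : K[X]) :
    w ((f * g) %ₘ φ) = w (f %ₘ φ) + w (g %ₘ φ) := by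
  simp only [hw.apply_of_degree_lt (degree_modByMonic_lt _ hφ.monic)]
  rw [hφ.apply_mul_modByMonic hμ, WithTop.map_add]

variable [IsOrderedAddMonoid Λ']

theorem apply_eq_min (hw : IsAugmentation μ φ ι γ w) (hφ : φ.Monic) (hφ0 : 0 < φ.degree)
    (f : K[X]) : w f = min (WithTop.map ι (μ (f %ₘ φ))) (γ + w (f /ₘ φ)) := by
  have hq : (f /ₘ φ).natDegree ≤ f.natDegree := natDegree_divByMonic f hφ ▸ Nat.sub_le _ _
  rw [hw.apply_eq_inf hφ hφ0 (Nat.le_succ f.natDegree), hw.apply_eq_inf hφ hφ0 hq,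
    Finset.inf_range_succ', add_comm (γ : WithTop Λ'), Finset.inf_add]
  simp [expansionCoeff, succ_nsmul, add_assoc]

theorem apply_le_apply_modByMonic (hw : IsAugmentation μ φ ι γ w) (hφ : φ.Monic)
    (hφ0 : 0 < φ.degree) (f : K[X]) : w f ≤ w (f %ₘ φ) := by
  rw [hw.apply_eq_min hφ hφ0 f, hw.apply_of_degree_lt (degree_modByMonic_lt f hφ)]
  exact min_le_left _ _

variable [LinearOrder Λ]

theorem apply_self_mul (hw : IsAugmentation μ φ ι γ w) (hμ : IsValExt v μ) (hφ : φ.Monic)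
    (hφ0 : 0 < φ.degree) (h : K[X]) : w (φ * h) = γ + w h := by
  rw [hw.apply_eq_min hφ hφ0, self_mul_modByMonic hφ, mul_divByMonic_cancel_left h hφ,
    hμ.map_zero, WithTop.map_top, min_top_left]

theorem apply_pow_mul (hw : IsAugmentation μ φ ι γ w) (hμ : IsValExt v μ) (hφ : φ.Monic)
    (hφ0 : 0 < φ.degree) (n : ℕ) (h : K[X]) : w (φ ^ n * h) = n • (γ : WithTop Λ') + w h := by
  induction n with
  | zero => simp
  | succ n ih =>
    rw [pow_succ', mul_assoc, hw.apply_self_mul hμ hφ hφ0, ih, succ_nsmul', add_assoc]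

theorem apply_self (hw : IsAugmentation μ φ ι γ w) (hμ : IsValExt v μ) (hφ : φ.Monic)
    (hφ0 : 0 < φ.degree) : w φ = γ := by
  simpa [hw.apply_of_degree_lt (degree_one.trans_lt hφ0), hμ.map_one] using
    hw.apply_self_mul hμ hφ hφ0 1

theorem min_le_apply_add (hw : IsAugmentation μ φ ι γ w) (hμ : IsValExt v μ) (hφ : φ.Monic)
    (hφ0 : 0 < φ.degree) (hι : Monotone ι) (f g : K[X]) : min (w f) (w g) ≤ w (f + g) := by
  have hmono := WithTop.monotone_map_iff.2 hι
  have hf : f.natDegree ≤ f.natDegree + g.natDegree := Nat.le_add_right _ _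
  have hg : g.natDegree ≤ f.natDegree + g.natDegree := Nat.le_add_left _ _
  have h := hw (f.natDegree + g.natDegree + 1)
    (fun s => expansionCoeff φ f s + expansionCoeff φ g s) fun s =>
      (degree_add_le _ _).trans_lt
        (max_lt (degree_expansionCoeff_lt hφ f s) (degree_expansionCoeff_lt hφ g s))
  simp only [add_mul, Finset.sum_add_distrib, sum_expansionCoeff hφ hφ0 hf,
    sum_expansionCoeff hφ hφ0 hg] at h
  rw [h, hw.apply_eq_inf hφ hφ0 hf, hw.apply_eq_inf hφ hφ0 hg]
  refine Finset.le_inf fun s hs => ?_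
  calc _ ≤ min (WithTop.map ι (μ (expansionCoeff φ f s)) + s • (γ : WithTop Λ'))
        (WithTop.map ι (μ (expansionCoeff φ g s)) + s • (γ : WithTop Λ')) :=
        by exact min_le_min (Finset.inf_le hs) (Finset.inf_le hs)
    _ = WithTop.map ι (min (μ (expansionCoeff φ f s)) (μ (expansionCoeff φ g s))) +
        s • (γ : WithTop Λ') := by
        rw [min_add_add_right, hmono.map_min]
    _ ≤ _ := add_le_add_left (hmono (hμ.min_le_map_add _ _)) _

theorem le_apply_sum (hw : IsAugmentation μ φ ι γ w) (hμ : IsValExt v μ) (hφ : φ.Monic)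
    (hφ0 : 0 < φ.degree) (hι : Monotone ι) {α : Type*} (s : Finset α) (x : α → K[X])
    {c : WithTop Λ'} (h : ∀ i ∈ s, c ≤ w (x i)) : c ≤ w (∑ i ∈ s, x i) :=
  Finset.sum_induction x (fun y => c ≤ w y)
    (fun _ _ ha hb => (le_min ha hb).trans (hw.min_le_apply_add hμ hφ hφ0 hι _ _))
    (by rw [hw.apply_zero hφ0]; exact le_top) h

variable [IsOrderedAddMonoid Λ]

theorem map_le_apply (hw : IsAugmentation μ φ ι γ w) (hμ : IsValExt v μ) (hφ : φ.Monic)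
    (hmin : MuMinimal μ φ) (hφ0 : 0 < φ.degree) (hι : Monotone ι)
    (hγ : WithTop.map ι (μ φ) ≤ γ) (f : K[X]) : WithTop.map ι (μ f) ≤ w f := by
  induction hn : f.natDegree using Nat.strong_induction_on generalizing f with
  | _ n ih =>
  have hmono := WithTop.monotone_map_iff.2 hι
  rw [hw.apply_eq_min hφ hφ0]
  refine le_min (hmono (hmin.apply_le_apply_modByMonic hφ hμ.map_zero f)) ?_
  rcases eq_or_ne (f /ₘ φ) 0 with hq | hq
  · rw [hq, hw.apply_zero hφ0, WithTop.add_top]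
    exact le_top
  calc WithTop.map ι (μ f) ≤ WithTop.map ι (μ (f /ₘ φ) + μ φ) :=
        hmono (hμ.apply_le_apply_divByMonic_add hφ hmin f)
    _ = WithTop.map ι (μ (f /ₘ φ)) + WithTop.map ι (μ φ) := WithTop.map_add ι _ _
    _ ≤ w (f /ₘ φ) + γ := add_le_add (ih _ (hn ▸ natDegree_divByMonic_lt hφ0 hq) _ rfl) hγ
    _ = γ + w (f /ₘ φ) := add_comm _ _

theorem map_lt_apply_of_lt_modByMonic (hw : IsAugmentation μ φ ι γ w) (hμ : IsValExt v μ)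
    (hφ : φ.Monic) (hmin : MuMinimal μ φ) (hφ0 : 0 < φ.degree) (hι : StrictMono ι)
    (hγ : WithTop.map ι (μ φ) < γ) (hf : f ≠ 0) (hlt : μ f < μ (f %ₘ φ)) :
    WithTop.map ι (μ f) < w f := by
  have hι' := WithTop.strictMono_map_iff.2 hι
  rw [hw.apply_eq_min hφ hφ0]
  refine lt_min (hι' hlt) ?_
  rcases eq_or_ne (f /ₘ φ) 0 with hq | hq
  · rwa [hq, hw.apply_zero hφ0, WithTop.add_top, lt_top_iff_ne_top, Ne, WithTop.map_eq_top_iff,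
      hμ.map_eq_top_iff]
  have hq' : WithTop.map ι (μ (f /ₘ φ)) ≠ ⊤ := by
    rwa [Ne, WithTop.map_eq_top_iff, hμ.map_eq_top_iff]
  calc WithTop.map ι (μ f) ≤ WithTop.map ι (μ (f /ₘ φ) + μ φ) :=
        hι'.monotone (hμ.apply_le_apply_divByMonic_add hφ hmin f)
    _ = WithTop.map ι (μ (f /ₘ φ)) + WithTop.map ι (μ φ) := WithTop.map_add ι _ _
    _ < WithTop.map ι (μ (f /ₘ φ)) + γ := WithTop.add_lt_add_left hq' hγ
    _ ≤ w (f /ₘ φ) + γ :=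
        add_le_add_left (hw.map_le_apply hμ hφ hmin hφ0 hι.monotone hγ.le _) _
    _ = γ + w (f /ₘ φ) := add_comm _ _

theorem map_eq_apply_iff_not_muDvd (hw : IsAugmentation μ φ ι γ w) (hμ : IsValExt v μ)
    (hφ : φ.Monic) (hmin : MuMinimal μ φ) (hφ0 : 0 < φ.degree) (hι : StrictMono ι)
    (hγ : WithTop.map ι (μ φ) < γ) (hf : f ≠ 0) :
    WithTop.map ι (μ f) = w f ↔ ¬ MuDvd μ φ f := by
  rw [muDvd_iff_lt_apply_modByMonic hφ (hmin.apply_le_apply_modByMonic hφ hμ.map_zero), not_lt]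
  refine ⟨fun heq => not_lt.1 fun hlt =>
    (hw.map_lt_apply_of_lt_modByMonic hμ hφ hmin hφ0 hι hγ hf hlt).ne heq, fun h => ?_⟩
  refine le_antisymm (hw.map_le_apply hμ hφ hmin hφ0 hι.monotone hγ.le f) ?_
  calc w f ≤ w (f %ₘ φ) := hw.apply_le_apply_modByMonic hφ hφ0 f
    _ = WithTop.map ι (μ (f %ₘ φ)) := hw.apply_of_degree_lt (degree_modByMonic_lt f hφ)
    _ ≤ WithTop.map ι (μ f) := (WithTop.monotone_map_iff.2 hι.monotone) h

theorem add_le_apply_mul (hw : IsAugmentation μ φ ι γ w) (hμ : IsValExt v μ) (hφ : φ.Monic)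
    (hmin : MuMinimal μ φ) (hφ0 : 0 < φ.degree) (hι : Monotone ι)
    (hγ : WithTop.map ι (μ φ) ≤ γ) (f g : K[X]) : w f + w g ≤ w (f * g) := by
  set a := expansionCoeff φ f
  set b := expansionCoeff φ g
  have hf := hw.apply_eq_inf hφ hφ0 (le_refl f.natDegree)
  have hg := hw.apply_eq_inf hφ hφ0 (le_refl g.natDegree)
  conv_rhs => rw [← sum_expansionCoeff hφ hφ0 (le_refl f.natDegree),
    ← sum_expansionCoeff hφ hφ0 (le_refl g.natDegree), Finset.sum_mul_sum]
  refine hw.le_apply_sum hμ hφ hφ0 hι _ _ fun s hs =>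
    hw.le_apply_sum hμ hφ hφ0 hι _ _ fun t ht => ?_
  calc w f + w g ≤ (WithTop.map ι (μ (a s)) + s • (γ : WithTop Λ')) +
        (WithTop.map ι (μ (b t)) + t • (γ : WithTop Λ')) :=
        add_le_add (hf.trans_le (Finset.inf_le hs)) (hg.trans_le (Finset.inf_le ht))
    _ = (s + t) • (γ : WithTop Λ') + WithTop.map ι (μ (a s * b t)) := by
        rw [hμ.map_mul, WithTop.map_add, add_nsmul]
        abel
    _ ≤ (s + t) • (γ : WithTop Λ') + w (a s * b t) :=
        add_le_add_right (hw.map_le_apply hμ hφ hmin hφ0 hι hγ _) _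
    _ = w (a s * φ ^ s * (b t * φ ^ t)) := by
        rw [← hw.apply_pow_mul hμ hφ hφ0]
        ring_nf

theorem apply_mul_le_of_lt (hw : IsAugmentation μ φ ι γ w) (hμ : IsValExt v μ)
    (hφ : IsKeyPol μ φ) (hι : Monotone ι) (hγ : WithTop.map ι (μ φ) ≤ γ)
    (hf : w f < w (f %ₘ φ)) (hg : g ≠ 0) (ih : w (f /ₘ φ * g) ≤ w (f /ₘ φ) + w g) :
    w (f * g) ≤ w f + w g := by
  have hφm := hφ.monic
  have hφ0 := hφ.degree_pos hμ
  have hwf : w f = γ + w (f /ₘ φ) := by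
    have h := hw.apply_eq_min hφm hφ0 f
    rw [← hw.apply_of_degree_lt (degree_modByMonic_lt f hφm)] at h
    rw [h] at hf ⊢
    exact min_eq_right ((min_lt_iff.1 hf).resolve_left (lt_irrefl _)).le
  have hwg : w g ≠ ⊤ := (hw.apply_eq_top_iff hμ hφm hφ0).not.2 hg
  -- `f * g = (f %ₘ φ) * g + φ * (f /ₘ φ * g)`, and the first summand is too large to matter.
  have hr : w f + w g < w (-(f %ₘ φ) * g) :=
    calc w f + w g < w (f %ₘ φ) + w g := WithTop.add_lt_add_right hwg hf
      _ = w (-(f %ₘ φ)) + w g := by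
        rw [hw.apply_of_degree_lt (degree_modByMonic_lt f hφm),
          hw.apply_of_degree_lt ((degree_neg _).trans_lt (degree_modByMonic_lt f hφm)),
          hμ.map_neg]
      _ ≤ w (-(f %ₘ φ) * g) := hw.add_le_apply_mul hμ hφm hφ.muMinimal hφ0 hι hγ _ _
  have hq : w (f * g + -(f %ₘ φ) * g) ≤ w f + w g := by
    rw [show f * g + -(f %ₘ φ) * g = φ * (f /ₘ φ * g) by
      linear_combination (-g) * modByMonic_add_div f φ, hw.apply_self_mul hμ hφm hφ0, hwf,
      add_assoc]
    exact add_le_add_right ih _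
  exact (min_le_iff.1 ((hw.min_le_apply_add hμ hφm hφ0 hι _ _).trans hq)).resolve_right
    (not_le.2 hr)

theorem apply_mul_le (hw : IsAugmentation μ φ ι γ w) (hμ : IsValExt v μ) (hφ : IsKeyPol μ φ)
    (hι : Monotone ι) (hγ : WithTop.map ι (μ φ) ≤ γ) (f g : K[X]) :
    w (f * g) ≤ w f + w g := by
  have hφm := hφ.monic
  have hφ0 := hφ.degree_pos hμ
  have hdeg : ∀ p, w p < w (p %ₘ φ) → (p /ₘ φ).natDegree < p.natDegree := fun p hp =>
    natDegree_divByMonic_lt hφ0 fun hq =>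
      hp.ne (by rw [(modByMonic_eq_self_iff hφm).2 ((divByMonic_eq_zero_iff hφm).1 hq)])
  induction hn : f.natDegree + g.natDegree using Nat.strong_induction_on generalizing f g with
  | _ n ih =>
  rcases eq_or_ne f 0 with rfl | hf0
  · rw [zero_mul, hw.apply_zero hφ0, WithTop.top_add]
  rcases eq_or_ne g 0 with rfl | hg0
  · rw [mul_zero, hw.apply_zero hφ0, WithTop.add_top]
  rcases (hw.apply_le_apply_modByMonic hφm hφ0 f).lt_or_eq with hf | hf
  · exact hw.apply_mul_le_of_lt hμ hφ hι hγ hf hg0 (ih _ (by have := hdeg f hf; omega) _ _ rfl)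
  rcases (hw.apply_le_apply_modByMonic hφm hφ0 g).lt_or_eq with hg | hg
  · rw [mul_comm, add_comm]
    exact hw.apply_mul_le_of_lt hμ hφ hι hγ hg hf0 (ih _ (by have := hdeg g hg; omega) _ _ rfl)
  calc w (f * g) ≤ w ((f * g) %ₘ φ) := hw.apply_le_apply_modByMonic hφm hφ0 _
    _ = w f + w g := by rw [hw.apply_mul_modByMonic hμ hφ, ← hf, ← hg]

theorem apply_mul (hw : IsAugmentation μ φ ι γ w) (hμ : IsValExt v μ) (hφ : IsKeyPol μ φ)
    (hι : Monotone ι) (hγ : WithTop.map ι (μ φ) ≤ γ) (f g : K[X]) : w (f * g) = w f + w g :=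
  (hw.apply_mul_le hμ hφ hι hγ f g).antisymm
    (hw.add_le_apply_mul hμ hφ.monic hφ.muMinimal (hφ.degree_pos hμ) hι hγ f g)

theorem isValExt (hw : IsAugmentation μ φ ι γ w) (hμ : IsValExt v μ) (hφ : IsKeyPol μ φ)
    (hι : Monotone ι) (hγ : WithTop.map ι (μ φ) ≤ γ) :
    IsValExt (fun c => WithTop.map ι (v c)) w := by
  have hφ0 := hφ.degree_pos hμ
  refine ⟨hw.apply_mul hμ hφ hι hγ, hw.min_le_apply_add hμ hφ.monic hφ0 hι,
    fun _ => hw.apply_eq_top_iff hμ hφ.monic hφ0, fun c => ?_⟩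
  rw [hw.apply_of_degree_lt (degree_C_le.trans_lt hφ0), hμ.map_C]

theorem isKeyPol (hw : IsAugmentation μ φ ι γ w) (hμ : IsValExt v μ) (hφ : IsKeyPol μ φ)
    (hι : Monotone ι) (hγ : WithTop.map ι (μ φ) ≤ γ) : IsKeyPol w φ := by
  have hφ0 := hφ.degree_pos hμ
  have hle := hw.apply_le_apply_modByMonic hφ.monic hφ0
  have hmin := muMinimal_of_forall_le_modByMonic hφ.monic hle
  refine ⟨hφ.monic, hmin, hφ.monic.ne_zero, hmin 1 one_ne_zero (degree_one.trans_lt hφ0),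
    fun f g hfg => ?_⟩
  simp only [muDvd_iff_lt_apply_modByMonic hφ.monic hle] at hfg ⊢
  by_contra! h
  refine hfg.not_ge ?_
  rw [hw.apply_mul_modByMonic hμ hφ, hw.apply_mul hμ hφ hι hγ]
  exact add_le_add h.1 h.2

theorem degree_le_of_isKeyPol (hw : IsAugmentation μ φ ι γ w) (hμ : IsValExt v μ)
    (hφ : IsKeyPol μ φ) (hι : StrictMono ι) (hγ : WithTop.map ι (μ φ) < γ) {ψ : K[X]}
    (hψ : IsKeyPol w ψ) : φ.degree ≤ ψ.degree := by
  have hwv := hw.isValExt hμ hφ hι.monotone hγ.le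
  have hmono := WithTop.monotone_map_iff.2 hι.monotone
  by_contra! hlt
  have hr := (degree_modByMonic_lt φ hψ.monic).trans hlt
  have hq := degree_divByMonic_lt φ ψ hφ.monic.ne_zero (hψ.degree_pos hwv)
  refine hγ.not_ge ?_
  calc (γ : WithTop Λ') = w φ := (hw.apply_self hμ hφ.monic (hφ.degree_pos hμ)).symm
    _ ≤ min (w (φ %ₘ ψ)) (w (φ /ₘ ψ) + w ψ) :=
        le_min (hψ.muMinimal.apply_le_apply_modByMonic hψ.monic hwv.map_zero φ)
          (hwv.apply_le_apply_divByMonic_add hψ.monic hψ.muMinimal φ)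
    _ = WithTop.map ι (min (μ (φ %ₘ ψ)) (μ (φ /ₘ ψ * ψ))) := by
        rw [hw.apply_of_degree_lt hr, hw.apply_of_degree_lt hq, hw.apply_of_degree_lt hlt,
          hmono.map_min, hμ.map_mul, WithTop.map_add]
    _ ≤ WithTop.map ι (μ φ) := hmono (by
        simpa only [mul_comm, modByMonic_add_div] using
          hμ.min_le_map_add (φ %ₘ ψ) (φ /ₘ ψ * ψ))

end IsAugmentation

end Augmentation

theorem statement_4_general {K : Type*} [Field K] {Λ : Type*} [AddCommGroup Λ] [LinearOrder Λ] [IsOrderedAddMonoid Λ]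
    (v : K → WithTop Λ)
    (μ : K[X] → WithTop Λ) (hμ : IsValExt v μ)
    (φ : K[X]) (hφ : IsKeyPol μ φ)
    {Λ' : Type*} [AddCommGroup Λ'] [LinearOrder Λ'] [IsOrderedAddMonoid Λ'] (ι : Λ →+ Λ') (hι : StrictMono ι)
    (γ : Λ') (hγ : WithTop.map ι (μ φ) < (γ : WithTop Λ'))
    (μ' : K[X] → WithTop Λ')
    (hμ' : ∀ (N : ℕ) (a : ℕ → K[X]), (∀ s, (a s).degree < φ.degree) →
        μ' (∑ s ∈ Finset.range N, a s * φ ^ s) =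
          (Finset.range N).inf fun s => WithTop.map ι (μ (a s)) + s • (γ : WithTop Λ')) :
    IsValExt (fun c => WithTop.map ι (v c)) μ' ∧
    (∀ f : K[X], WithTop.map ι (μ f) ≤ μ' f) ∧
    (∀ f : K[X], f ≠ 0 → (WithTop.map ι (μ f) = μ' f ↔ ¬ MuDvd μ φ f)) ∧
    IsKeyPol μ' φ ∧
    (∀ ψ : K[X], IsKeyPol μ' ψ → φ.degree ≤ ψ.degree) := by
  have hw : IsAugmentation μ φ ι γ μ' := hμ'
  have hφ0 := hφ.degree_pos hμ
  exact ⟨hw.isValExt hμ hφ hι.monotone hγ.le,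
    hw.map_le_apply hμ hφ.monic hφ.muMinimal hφ0 hι.monotone hγ.le,
    fun _ hf => hw.map_eq_apply_iff_not_muDvd hμ hφ.monic hφ.muMinimal hφ0 hι hγ hf,
    hw.isKeyPol hμ hφ hι.monotone hγ.le,
    fun _ hψ => hw.degree_le_of_isKeyPol hμ hφ hι hγ hψ⟩

/-- Properties of the augmented valuation `μ' = [μ; φ, γ]`. -/
theorem statement_4 {K : Type*} [Field K] {Λ : Type*} [AddCommGroup Λ] [LinearOrder Λ] [IsOrderedAddMonoid Λ]
    (v : K → WithTop Λ) (hv : IsVal v)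
    (μ : K[X] → WithTop Λ) (hμ : IsValExt v μ)
    (φ : K[X]) (hφ : IsKeyPol μ φ)
    {Λ' : Type*} [AddCommGroup Λ'] [LinearOrder Λ'] [IsOrderedAddMonoid Λ'] (ι : Λ →+ Λ') (hι : StrictMono ι)
    (γ : Λ') (hγ : WithTop.map ι (μ φ) < (γ : WithTop Λ'))
    (μ' : K[X] → WithTop Λ')
    (hμ' : ∀ (N : ℕ) (a : ℕ → K[X]), (∀ s, (a s).degree < φ.degree) →
        μ' (∑ s ∈ Finset.range N, a s * φ ^ s) =
          (Finset.range N).inf fun s => WithTop.map ι (μ (a s)) + s • (γ : WithTop Λ')) :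
    IsValExt (fun c => WithTop.map ι (v c)) μ' ∧
    (∀ f : K[X], WithTop.map ι (μ f) ≤ μ' f) ∧
    (∀ f : K[X], f ≠ 0 → (WithTop.map ι (μ f) = μ' f ↔ ¬ MuDvd μ φ f)) ∧
    IsKeyPol μ' φ ∧
    (∀ ψ : K[X], IsKeyPol μ' ψ → φ.degree ≤ ψ.degree) :=
  statement_4_general v μ hμ φ hφ ι hι γ hγ μ' hμ'
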